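/- arXiv:1712.08000 — 11 statements merged into one kernel-verified Lean document; each statement's English description precedes it below -/
import Mathlib

section
/- Let (A, μ, α, β) be a BiHom-Novikov algebra with α, β bijective. Then for all x, y, z in A: [β(x),α(y)]·α²(z) + [β(y),α(z)]·α²(x) + [β(z),α(x)]·α²(y) = 0, where [β(x),α(y)] := β(x)α(y) − β(y)α(x). -/
theorem stmt0 {K A : Type*} [Field K] [AddCommGroup A] [Module K A]
    (m : A →ₗ[K] A →ₗ[K] A) (α β : A →ₗ[K] A)
    (hcomm : ∀ x, α (β x) = β (α x))
    (hαm : ∀ x y, α (m x y) = m (α x) (α y))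
    (hβm : ∀ x y, β (m x y) = m (β x) (β y))
    (hax1 : ∀ x y z, m (m x y) (α z) = m (m x z) (α y))
    (hax2 : ∀ x y z, m (m (β x) (α y)) (β z) - m (α (β x)) (m (α y) z)
      = m (m (β y) (α x)) (β z) - m (α (β y)) (m (α x) z))
    (hαbij : Function.Bijective α) (hβbij : Function.Bijective β) :
    ∀ x y z, m (m (β x) (α y) - m (β y) (α x)) (α (α z))
      + m (m (β y) (α z) - m (β z) (α y)) (α (α x))
      + m (m (β z) (α x) - m (β x) (α z)) (α (α y)) = 0 := by
  intro x y z
  simp only [map_sub, LinearMap.sub_apply]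
  rw [hax1 (β x) (α y) (α z), hax1 (β y) (α z) (α x), hax1 (β z) (α x) (α y)]
  abel
end

section
/- Let (A, μ, α, β) be a BiHom-Novikov algebra with α, β bijective. Then for all x, y, z in A: β²(z)[β(x),α(y)] + β²(x)[β(y),α(z)] + β²(y)[β(z),α(x)] = 0, where [β(x),α(y)] := β(x)α(y) − β(y)α(x). -/
theorem stmt1 {K A : Type*} [Field K] [AddCommGroup A] [Module K A]
    (m : A →ₗ[K] A →ₗ[K] A) (α β : A →ₗ[K] A)
    (hcomm : ∀ x, α (β x) = β (α x))
    (hαm : ∀ x y, α (m x y) = m (α x) (α y))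
    (hβm : ∀ x y, β (m x y) = m (β x) (β y))
    (hax1 : ∀ x y z, m (m x y) (α z) = m (m x z) (α y))
    (hax2 : ∀ x y z, m (m (β x) (α y)) (β z) - m (α (β x)) (m (α y) z)
      = m (m (β y) (α x)) (β z) - m (α (β y)) (m (α x) z))
    (hαbij : Function.Bijective α) (hβbij : Function.Bijective β) :
    ∀ x y z, m (β (β z)) (m (β x) (α y) - m (β y) (α x))
      + m (β (β x)) (m (β y) (α z) - m (β z) (α y))
      + m (β (β y)) (m (β z) (α x) - m (β x) (α z)) = 0 := by
  intro x y z
  obtain ⟨u, hu⟩ := hαbij.surjective (β x)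
  obtain ⟨v, hv⟩ := hαbij.surjective (β y)
  obtain ⟨w, hw⟩ := hαbij.surjective (β z)
  have h1 := hax2 w u (α y)
  have h2 := hax2 u v (α z)
  have h3 := hax2 v w (α x)
  have k1 := hax1 (β w) (α u) (β y)
  have k2 := hax1 (β u) (α v) (β z)
  have k3 := hax1 (β v) (α w) (β x)
  simp only [hcomm, hu, hv, hw] at h1 h2 h3 k1 k2 k3
  simp only [map_sub]
  linear_combination (norm := abel) -h1 - h2 - h3 + k1 + k2 + k3
end

section
/- Let (A, μ, α, β) be a BiHom-Novikov algebra with α, β bijective. Define [x,y] := xy − (α⁻¹β(y))(αβ⁻¹(x)). Then (A, [·,·], α, β) is a BiHom-Lie algebra; in particular [β(x),α(y)] = −[β(y),α(x)] and the BiHom-Jacobi identity [β²(x),[β(y),α(z)]] + [β²(y),[β(z),α(x)]] + [β²(z),[β(x),α(y)]] = 0 holds for all x, y, z. -/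
theorem stmt2 {K A : Type*} [Field K] [AddCommGroup A] [Module K A]
    (m : A →ₗ[K] A →ₗ[K] A) (α β : A ≃ₗ[K] A)
    (hcomm : ∀ x, α (β x) = β (α x))
    (hαm : ∀ x y, α (m x y) = m (α x) (α y))
    (hβm : ∀ x y, β (m x y) = m (β x) (β y))
    (hax1 : ∀ x y z, m (m x y) (α z) = m (m x z) (α y))
    (hax2 : ∀ x y z, m (m (β x) (α y)) (β z) - m (α (β x)) (m (α y) z)
      = m (m (β y) (α x)) (β z) - m (α (β y)) (m (α x) z))
    (br : A → A → A)
    (hbr : ∀ x y, br x y = m x y - m (α.symm (β y)) (α (β.symm x))) :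
    (∀ x y, α (br x y) = br (α x) (α y)) ∧
    (∀ x y, β (br x y) = br (β x) (β y)) ∧
    (∀ x y, br (β x) (α y) = - br (β y) (α x)) ∧
    (∀ x y z, br (β (β x)) (br (β y) (α z)) + br (β (β y)) (br (β z) (α x))
      + br (β (β z)) (br (β x) (α y)) = 0) := by
  have hc1 : ∀ x, α.symm (β x) = β (α.symm x) := by
    intro x
    have := hcomm (α.symm x)
    rw [α.apply_symm_apply] at this
    rw [← this, α.symm_apply_apply]
  have hc2 : ∀ x, β.symm (α x) = α (β.symm x) := by
    intro x
    have := hcomm (β.symm x)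
    rw [β.apply_symm_apply] at this
    rw [this, β.symm_apply_apply]
  have hc3 : ∀ x, β (α (β.symm x)) = α x := by
    intro x
    rw [← hc2, β.apply_symm_apply]
  have hc4 : ∀ x, α (β (α.symm x)) = β x := by
    intro x
    rw [hcomm, α.apply_symm_apply]
  have hαm' : ∀ x y, α.symm (m x y) = m (α.symm x) (α.symm y) := by
    intro x y
    apply α.injective
    rw [α.apply_symm_apply, hαm, α.apply_symm_apply, α.apply_symm_apply]
  have hβm' : ∀ x y, β.symm (m x y) = m (β.symm x) (β.symm y) := by
    intro x y
    apply β.injective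
    rw [β.apply_symm_apply, hβm, β.apply_symm_apply, β.apply_symm_apply]
  refine ⟨?_, ?_, ?_, ?_⟩
  · intro x y
    simp only [hbr, map_sub, hαm, hc1, hc2, hc3, hc4, hcomm, α.apply_symm_apply,
      α.symm_apply_apply, β.apply_symm_apply, β.symm_apply_apply]
  · intro x y
    simp only [hbr, map_sub, hβm, hc1, hc2, hc3, hc4, hcomm, α.apply_symm_apply,
      α.symm_apply_apply, β.apply_symm_apply, β.symm_apply_apply]
  · intro x y
    simp only [hbr, hc1, hc2, hc3, hc4, hcomm, α.apply_symm_apply, α.symm_apply_apply,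
      β.apply_symm_apply, β.symm_apply_apply]
    abel
  · intro x y z
    have key : ∀ X Y Z : A,
        m (m (β (β (α.symm X))) (β Y)) (β (α Z)) - m (β (β X)) (m (β Y) (α Z))
        = m (m (β (β (α.symm Y))) (β X)) (β (α Z)) - m (β (β Y)) (m (β X) (α Z)) := by
      intro X Y Z
      have h := hax2 (α.symm (β X)) (α.symm (β Y)) (α Z)
      simp only [hc1, hc2, hc3, hc4, hcomm, α.apply_symm_apply, α.symm_apply_apply,
        β.apply_symm_apply, β.symm_apply_apply] at h
      exact h
    simp only [hbr, map_sub, LinearMap.sub_apply, hαm', hβm', hαm, hβm, hc1, hc2, hc3, hc4, hcomm,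
      α.apply_symm_apply, α.symm_apply_apply, β.apply_symm_apply, β.symm_apply_apply]
    linear_combination (norm := abel1) - key x y z - key y z x - key z x y
end

section
/- Let (A, μ, α, β) be an involutive BiHom-Novikov algebra (α² = β² = id). Define x ∗ y := α(x)β(y). Then (A, ∗) is a Novikov algebra, i.e., (x∗y)∗z = (x∗z)∗y and (x∗y)∗z − x∗(y∗z) = (y∗x)∗z − y∗(x∗z) for all x, y, z. -/
theorem stmt3 {K A : Type*} [Field K] [AddCommGroup A] [Module K A]
    (m : A →ₗ[K] A →ₗ[K] A) (α β : A →ₗ[K] A)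
    (hcomm : ∀ x, α (β x) = β (α x))
    (hαm : ∀ x y, α (m x y) = m (α x) (α y))
    (hβm : ∀ x y, β (m x y) = m (β x) (β y))
    (hax1 : ∀ x y z, m (m x y) (α z) = m (m x z) (α y))
    (hax2 : ∀ x y z, m (m (β x) (α y)) (β z) - m (α (β x)) (m (α y) z)
      = m (m (β y) (α x)) (β z) - m (α (β y)) (m (α x) z))
    (hα2 : ∀ x, α (α x) = x) (hβ2 : ∀ x, β (β x) = x)
    (star : A → A → A) (hstar : ∀ x y, star x y = m (α x) (β y)) :
    (∀ x y z, star (star x y) z = star (star x z) y) ∧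
    (∀ x y z, star (star x y) z - star x (star y z)
      = star (star y x) z - star y (star x z)) := by
  have key : ∀ x y, star (star x y) = fun z => m (m x (α (β y))) (β z) := by
    intro x y
    funext z
    rw [hstar, hstar, hαm, hα2]
  constructor
  · intro x y z
    have h1 : star (star x y) z = m (m x (α (β y))) (β z) := by rw [key]
    have h2 : star (star x z) y = m (m x (α (β z))) (β y) := by rw [key]
    rw [h1, h2]
    have := hax1 x (α (β y)) (α (β z))
    rwa [hα2, hα2] at this
  · intro x y z
    have h1 : star (star x y) z = m (m x (α (β y))) (β z) := by rw [key]
    have h2 : star (star y x) z = m (m y (α (β x))) (β z) := by rw [key]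
    have h3 : star x (star y z) = m (α x) (m (α (β y)) z) := by
      rw [hstar, hstar, hβm, hβ2, hcomm]
    have h4 : star y (star x z) = m (α y) (m (α (β x)) z) := by
      rw [hstar, hstar, hβm, hβ2, hcomm]
    rw [h1, h2, h3, h4]
    have := hax2 (β x) (β y) z
    simp only [hβ2, hcomm] at this ⊢; exact this
end

section
/- Let (A, μ) be a Novikov algebra and α, β : A → A commuting algebra morphisms (α∘β = β∘α, α(xy) = α(x)α(y), β(xy) = β(x)β(y)). Define x ⋆ y := α(x)β(y). Then (A, ⋆, α, β) is a BiHom-Novikov algebra. -/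
theorem stmt4 {K A : Type*} [Field K] [AddCommGroup A] [Module K A]
    (m : A →ₗ[K] A →ₗ[K] A) (α β : A →ₗ[K] A)
    (hcomm : ∀ x, α (β x) = β (α x))
    (hαm : ∀ x y, α (m x y) = m (α x) (α y))
    (hβm : ∀ x y, β (m x y) = m (β x) (β y))
    (hnov1 : ∀ x y z, m (m x y) z = m (m x z) y)
    (hnov2 : ∀ x y z, m (m x y) z - m x (m y z) = m (m y x) z - m y (m x z))
    (star : A → A → A) (hstar : ∀ x y, star x y = m (α x) (β y)) :
    (∀ x y, α (star x y) = star (α x) (α y)) ∧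
    (∀ x y, β (star x y) = star (β x) (β y)) ∧
    (∀ x y z, star (star x y) (α z) = star (star x z) (α y)) ∧
    (∀ x y z, star (star (β x) (α y)) (β z) - star (α (β x)) (star (α y) z)
      = star (star (β y) (α x)) (β z) - star (α (β y)) (star (α x) z)) := by
  refine ⟨fun x y => ?_, fun x y => ?_, fun x y z => ?_, fun x y z => ?_⟩
  · simp only [hstar, hαm, hcomm]
  · simp only [hstar, hβm, hcomm]
  · simp only [hstar, hαm, hβm, hcomm]
    exact hnov1 _ _ _
  · simp only [hstar, hαm, hβm, hcomm]
    exact hnov2 _ _ _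
end

section
/- Let (A, μ, α, β) be a regular BiHom-Novikov algebra (α, β bijective algebra automorphisms). Define [x,y] := xy − α⁻¹(β(y))α(β⁻¹(x)) and [x,y]' := [α⁻¹(x), β⁻¹(y)]. Then (A, [·,·]') is a Lie algebra: [x,y]' = −[y,x]' and [[x,y]',z]' + [[y,z]',x]' + [[z,x]',y]' = 0 for all x, y, z. -/
theorem stmt6 {K A : Type*} [Field K] [AddCommGroup A] [Module K A]
    (m : A →ₗ[K] A →ₗ[K] A) (α β : A ≃ₗ[K] A)
    (hcomm : ∀ x, α (β x) = β (α x))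
    (hαm : ∀ x y, α (m x y) = m (α x) (α y))
    (hβm : ∀ x y, β (m x y) = m (β x) (β y))
    (hax1 : ∀ x y z, m (m x y) (α z) = m (m x z) (α y))
    (hax2 : ∀ x y z, m (m (β x) (α y)) (β z) - m (α (β x)) (m (α y) z)
      = m (m (β y) (α x)) (β z) - m (α (β y)) (m (α x) z))
    (br br' : A → A → A)
    (hbr : ∀ x y, br x y = m x y - m (α.symm (β y)) (α (β.symm x)))
    (hbr' : ∀ x y, br' x y = br (α.symm x) (β.symm y)) :
    (∀ x y, br' x y = - br' y x) ∧
    (∀ x y z, br' (br' x y) z + br' (br' y z) x + br' (br' z x) y = 0) := by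
  have hc0 : ∀ x, β (α x) = α (β x) := fun x => (hcomm x).symm
  have hc1 : ∀ x, β (α.symm x) = α.symm (β x) := by
    intro x; apply α.injective
    rw [← hc0, α.apply_symm_apply, α.apply_symm_apply]
  have hc2 : ∀ x, β.symm (α x) = α (β.symm x) := by
    intro x; apply β.injective
    rw [β.apply_symm_apply, hc0, β.apply_symm_apply]
  have hc3 : ∀ x, β.symm (α.symm x) = α.symm (β.symm x) := by
    intro x; apply α.injective
    rw [← hc2, α.apply_symm_apply, α.apply_symm_apply]
  have hαm' : ∀ x y, α.symm (m x y) = m (α.symm x) (α.symm y) := by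
    intro x y; apply α.injective
    rw [α.apply_symm_apply, hαm, α.apply_symm_apply, α.apply_symm_apply]
  have hβm' : ∀ x y, β.symm (m x y) = m (β.symm x) (β.symm y) := by
    intro x y; apply β.injective
    rw [β.apply_symm_apply, hβm, β.apply_symm_apply, β.apply_symm_apply]
  have key : ∀ x y, br' x y = m (α.symm x) (β.symm y) - m (α.symm y) (β.symm x) := by
    intro x y
    rw [hbr', hbr, β.apply_symm_apply, hc3, α.apply_symm_apply]
  have E1 : ∀ x y z,
      m (m (α.symm (α.symm x)) (α.symm (β.symm y))) (β.symm z)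
        - m (α.symm x) (m (α.symm (β.symm y)) (β.symm (β.symm z)))
      = m (m (α.symm (α.symm y)) (α.symm (β.symm x))) (β.symm z)
        - m (α.symm y) (m (α.symm (β.symm x)) (β.symm (β.symm z))) := by
    intro x y z
    have h := hax2 (α.symm (α.symm (β.symm x))) (α.symm (α.symm (β.symm y)))
      (β.symm (β.symm z))
    simp only [hc1, hc3, α.apply_symm_apply, β.apply_symm_apply] at h
    exact h
  refine ⟨fun x y => by rw [key, key]; abel, fun x y z => ?_⟩
  simp only [key, map_sub, LinearMap.sub_apply, hαm', hβm', hc3]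
  have g1 := E1 x y z
  have g2 := E1 y z x
  have g3 := E1 z x y
  rw [sub_eq_sub_iff_add_eq_add] at g1 g2 g3
  linear_combination (norm := abel) g1 + g2 + g3
end

section
/- Let (A, μ) be a commutative associative algebra, α, β : A → A two commuting algebra morphisms, and D : A → A a derivation (D(xy) = D(x)y + xD(y)) with Dα = αD and Dβ = βD. Define x ⋆ y := α(x)D(β(y)). Then (A, ⋆, α, β) is a BiHom-Novikov algebra. -/
theorem stmt7 {K A : Type*} [Field K] [AddCommGroup A] [Module K A]
    (m : A →ₗ[K] A →ₗ[K] A) (α β D : A →ₗ[K] A)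
    (hmc : ∀ x y, m x y = m y x)
    (hma : ∀ x y z, m (m x y) z = m x (m y z))
    (hcomm : ∀ x, α (β x) = β (α x))
    (hαm : ∀ x y, α (m x y) = m (α x) (α y))
    (hβm : ∀ x y, β (m x y) = m (β x) (β y))
    (hD : ∀ x y, D (m x y) = m (D x) y + m x (D y))
    (hDα : ∀ x, D (α x) = α (D x)) (hDβ : ∀ x, D (β x) = β (D x))
    (star : A → A → A) (hstar : ∀ x y, star x y = m (α x) (D (β y))) :
    (∀ x y, α (star x y) = star (α x) (α y)) ∧
    (∀ x y, β (star x y) = star (β x) (β y)) ∧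
    (∀ x y z, star (star x y) (α z) = star (star x z) (α y)) ∧
    (∀ x y z, star (star (β x) (α y)) (β z) - star (α (β x)) (star (α y) z)
      = star (star (β y) (α x)) (β z) - star (α (β y)) (star (α x) z)) := by
  refine ⟨?_, ?_, ?_, ?_⟩
  · intro x y
    simp only [hstar, hαm, hDβ, hDα, hcomm]
  · intro x y
    simp only [hstar, hβm, hDβ, hDα, hcomm]
  · intro x y z
    simp only [hstar, hαm, hDβ, hDα, hcomm, hma]
    rw [hmc (β (α (D y)))]
  · intro x y z
    simp only [hstar, hαm, hβm, hD, map_add, hDβ, hDα, hcomm, hma]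
    rw [← hma (β (α (α x))) (β (α (α y))) (β (β (D (D z)))), hmc (β (α (α x))) (β (α (α y))), hma]
    abel
end

section
/- Let (A, μ) be a commutative associative algebra with commuting algebra morphisms α, β and a derivation D commuting with α and β. For x ⋆ y := α(x)D(β(y)), the identity (x ⋆ y) ⋆ α(z) = (x ⋆ z) ⋆ α(y) holds for all x, y, z ∈ A. -/
theorem stmt8 {K A : Type*} [Field K] [AddCommGroup A] [Module K A]
    (m : A →ₗ[K] A →ₗ[K] A) (α β D : A →ₗ[K] A)
    (hmc : ∀ x y, m x y = m y x)
    (hma : ∀ x y z, m (m x y) z = m x (m y z))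
    (hcomm : ∀ x, α (β x) = β (α x))
    (hαm : ∀ x y, α (m x y) = m (α x) (α y))
    (hβm : ∀ x y, β (m x y) = m (β x) (β y))
    (hD : ∀ x y, D (m x y) = m (D x) y + m x (D y))
    (hDα : ∀ x, D (α x) = α (D x)) (hDβ : ∀ x, D (β x) = β (D x))
    (star : A → A → A) (hstar : ∀ x y, star x y = m (α x) (D (β y))) :
    ∀ x y z, star (star x y) (α z) = star (star x z) (α y) := by
  intro x y z
  simp only [hstar, hαm, ← hcomm, hDα]
  rw [← hαm, ← hαm, ← hαm, ← hαm, hma, hma, hmc (D (β y))]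
end

section
/- Let (A, ⋆, α, β) be a BiHom-Novikov algebra and P : A → A a Rota-Baxter operator of weight λ (P(x)⋆P(y) = P(P(x)⋆y + x⋆P(y) + λ x⋆y)) commuting with α and β. Define x ∘ y := P(x)⋆y + x⋆P(y) + λ x⋆y. Then (x∘y)∘α(z) = (x∘z)∘α(y) for all x, y, z ∈ A. -/
theorem stmt9 {K A : Type*} [Field K] [AddCommGroup A] [Module K A]
    (m : A →ₗ[K] A →ₗ[K] A) (α β P : A →ₗ[K] A) (lam : K)
    (hcomm : ∀ x, α (β x) = β (α x))
    (hαm : ∀ x y, α (m x y) = m (α x) (α y))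
    (hβm : ∀ x y, β (m x y) = m (β x) (β y))
    (hax1 : ∀ x y z, m (m x y) (α z) = m (m x z) (α y))
    (hax2 : ∀ x y z, m (m (β x) (α y)) (β z) - m (α (β x)) (m (α y) z)
      = m (m (β y) (α x)) (β z) - m (α (β y)) (m (α x) z))
    (hPα : ∀ x, P (α x) = α (P x)) (hPβ : ∀ x, P (β x) = β (P x))
    (hRB : ∀ x y, m (P x) (P y) = P (m (P x) y + m x (P y) + lam • m x y))
    (circ : A → A → A)
    (hcirc : ∀ x y, circ x y = m (P x) y + m x (P y) + lam • m x y) :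
    ∀ x y z, circ (circ x y) (α z) = circ (circ x z) (α y) := by
  intro x y z
  simp only [hcirc, ← hRB, hPα, map_add, map_smul, LinearMap.add_apply,
    LinearMap.smul_apply]
  rw [hax1 (P x) (P y) z, hax1 (P x) y (P z), hax1 x (P y) (P z),
    hax1 x y (P z), hax1 (P x) y z, hax1 x (P y) z, hax1 x y z]
  module
end

section
/- Let (A, ⋆, α, β, P) be a Rota-Baxter BiHom-Novikov algebra of weight λ with P commuting with α and β. Define x ∘ y := P(x)⋆y + x⋆P(y) + λ x⋆y. Then (A, ∘, α, β) is a BiHom-Novikov algebra. -/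
theorem stmt10 {K A : Type*} [Field K] [AddCommGroup A] [Module K A]
    (m : A →ₗ[K] A →ₗ[K] A) (α β P : A →ₗ[K] A) (lam : K)
    (hcomm : ∀ x, α (β x) = β (α x))
    (hαm : ∀ x y, α (m x y) = m (α x) (α y))
    (hβm : ∀ x y, β (m x y) = m (β x) (β y))
    (hax1 : ∀ x y z, m (m x y) (α z) = m (m x z) (α y))
    (hax2 : ∀ x y z, m (m (β x) (α y)) (β z) - m (α (β x)) (m (α y) z)
      = m (m (β y) (α x)) (β z) - m (α (β y)) (m (α x) z))
    (hPα : ∀ x, P (α x) = α (P x)) (hPβ : ∀ x, P (β x) = β (P x))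
    (hRB : ∀ x y, m (P x) (P y) = P (m (P x) y + m x (P y) + lam • m x y))
    (circ : A → A → A)
    (hcirc : ∀ x y, circ x y = m (P x) y + m x (P y) + lam • m x y) :
    (∀ x y, α (circ x y) = circ (α x) (α y)) ∧
    (∀ x y, β (circ x y) = circ (β x) (β y)) ∧
    (∀ x y z, circ (circ x y) (α z) = circ (circ x z) (α y)) ∧
    (∀ x y z, circ (circ (β x) (α y)) (β z) - circ (α (β x)) (circ (α y) z)
      = circ (circ (β y) (α x)) (β z) - circ (α (β y)) (circ (α x) z)) := by
  refine ⟨?_, ?_, ?_, ?_⟩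
  · intro x y
    simp only [hcirc, map_add, map_smul, hαm, hPα]
  · intro x y
    simp only [hcirc, map_add, map_smul, hβm, hPβ]
  · intro x y z
    simp only [hcirc]
    rw [← hRB, ← hRB]
    simp only [map_add, map_smul, LinearMap.add_apply, LinearMap.smul_apply, hPα, hPβ]
    linear_combination (norm := module) hax1 (P x) (P y) z + hax1 (P x) y (P z) +
      hax1 x (P y) (P z) + lam • hax1 x y (P z) + lam • hax1 (P x) y z +
      lam • hax1 x (P y) z + (lam * lam) • hax1 x y z
  · intro x y z
    simp only [hcirc]
    rw [← hRB, ← hRB, ← hRB, ← hRB]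
    simp only [map_add, map_smul, LinearMap.add_apply, LinearMap.smul_apply, hPα, hPβ]
    linear_combination (norm := module) hax2 (P x) (P y) z + hax2 (P x) y (P z) +
      hax2 x (P y) (P z) + lam • hax2 x y (P z) + lam • hax2 (P x) y z +
      lam • hax2 x (P y) z + (lam * lam) • hax2 x y z
end

section
/- Let (A, μ, α, β) be a BiHom-Novikov algebra with α, β bijective. Then for all x, y, z ∈ A the following 'right-commutativity in twisted form' holds: β²(z)(β(x)α(y)) − β²(x)(β(z)α(y)) = [α⁻¹β²(z), β(x)]·αβ(y), where [a,b] := ab − (α⁻¹β(b))(αβ⁻¹(a)). -/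
theorem stmt18 {K A : Type*} [Field K] [AddCommGroup A] [Module K A]
    (m : A →ₗ[K] A →ₗ[K] A) (α β : A ≃ₗ[K] A)
    (hcomm : ∀ x, α (β x) = β (α x))
    (hαm : ∀ x y, α (m x y) = m (α x) (α y))
    (hβm : ∀ x y, β (m x y) = m (β x) (β y))
    (hax1 : ∀ x y z, m (m x y) (α z) = m (m x z) (α y))
    (hax2 : ∀ x y z, m (m (β x) (α y)) (β z) - m (α (β x)) (m (α y) z)
      = m (m (β y) (α x)) (β z) - m (α (β y)) (m (α x) z))
    (lbr : A → A → A)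
    (hlbr : ∀ a b, lbr a b = m a b - m (α.symm (β b)) (α (β.symm a))) :
    ∀ x y z, m (β (β z)) (m (β x) (α y)) - m (β (β x)) (m (β z) (α y))
      = m (lbr (α.symm (β (β z))) (β x)) (α (β y)) := by
  -- helper: α.symm commutes with β
  have hsc : ∀ a, α.symm (β a) = β (α.symm a) := by
    intro a
    apply α.injective
    rw [α.apply_symm_apply, hcomm, α.apply_symm_apply]
  have hsc2 : ∀ a, β.symm (α.symm a) = α.symm (β.symm a) := by
    intro a
    have := hsc (β.symm a)
    rw [β.apply_symm_apply] at this
    rw [this, β.symm_apply_apply]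
  intro x y z
  have h := hax2 (α.symm (β z)) (α.symm (β x)) (α y)
  rw [α.apply_symm_apply, α.apply_symm_apply] at h
  rw [show α (β (α.symm (β z))) = β (β z) by rw [← hsc, α.apply_symm_apply],
      show α (β (α.symm (β x))) = β (β x) by rw [← hsc, α.apply_symm_apply],
      show β (α y) = α (β y) from (hcomm y).symm] at h
  rw [hlbr]
  rw [show β.symm (α.symm (β (β z))) = α.symm (β z) by
        rw [hsc2, β.symm_apply_apply],
      α.apply_symm_apply,
      show α.symm (β (β z)) = β (α.symm (β z)) from hsc _,
      show α.symm (β (β x)) = β (α.symm (β x)) from hsc _]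
  rw [map_sub, LinearMap.sub_apply]
  linear_combination (norm := abel) -h
end
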